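/- For every finite set S that is down-admissible for v, the p-adic valuation of the rational number λ_{v,S} equals −|S|. -/

import Mathlib

namespace SL2Tilt

/-- The `i`-th `p`-adic digit of `v`. -/
def dig (p v i : ℕ) : ℕ := v / p ^ i % p

/-- A stretch: a nonempty finite set of consecutive integers. -/
def IsStretch (S : Finset ℕ) : Prop :=
  S.Nonempty ∧ ∀ a ∈ S, ∀ b ∈ S, ∀ c, a ≤ c → c ≤ b → c ∈ S

/-- `S` is down-admissible for `v` (with respect to the prime `p`):
(d1) the digit of `v` at the minimum of each maximal stretch of `S` is nonzero, and
(d2) if `s ∈ S` and the `(s+1)`-st digit is `0`, then `s + 1 ∈ S`. -/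
def DownAdm (p v : ℕ) (S : Finset ℕ) : Prop :=
  (∀ s ∈ S, (s = 0 ∨ s - 1 ∉ S) → dig p v s ≠ 0) ∧
  (∀ s ∈ S, dig p v (s + 1) = 0 → s + 1 ∈ S)

/-- `S` is up-admissible for `v` (with respect to the prime `p`):
(u1) the digit of `v` at the minimum of each maximal stretch of `S` is nonzero, and
(u2) if `s ∈ S` and the `(s+1)`-st digit is `p - 1`, then `s + 1 ∈ S`. -/
def UpAdm (p v : ℕ) (S : Finset ℕ) : Prop :=
  (∀ s ∈ S, (s = 0 ∨ s - 1 ∉ S) → dig p v s ≠ 0) ∧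
  (∀ s ∈ S, dig p v (s + 1) = p - 1 → s + 1 ∈ S)

/-- `v[S] = ∑ᵢ εᵢ aᵢ pⁱ` (εᵢ = -1 for i ∈ S, else 1), as an integer.
All nonzero digits of `v` have index `< v`, so the range `Finset.range v ∪ S` suffices. -/
def vdown (p v : ℕ) (S : Finset ℕ) : ℤ :=
  ∑ i ∈ Finset.range v ∪ S,
    (if i ∈ S then (-1 : ℤ) else 1) * (dig p v i : ℤ) * (p : ℤ) ^ i

/-- `v(S) = ∑ᵢ aᵢ' pⁱ` where `aᵢ' = -aᵢ` if `i ∈ S`, `aᵢ' = aᵢ + 2` if `i ∉ S` and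
`i - 1 ∈ S`, and `aᵢ' = aᵢ` otherwise; as an integer. -/
def vup (p v : ℕ) (S : Finset ℕ) : ℤ :=
  ∑ i ∈ Finset.range v ∪ S ∪ S.image (· + 1),
    (if i ∈ S then -(dig p v i : ℤ)
      else if i - 1 ∈ S then (dig p v i : ℤ) + 2
      else (dig p v i : ℤ)) * (p : ℤ) ^ i

/-- `v[S]` as a natural number. -/
def vdownN (p v : ℕ) (S : Finset ℕ) : ℕ := (vdown p v S).toNat

/-- `v(S)` as a natural number. -/
def vupN (p v : ℕ) (S : Finset ℕ) : ℕ := (vup p v S).toNat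

/-- `fancest' p v s` is `v` with the `p`-adic digits in positions `< s` set to zero.
This is the ancestor `fancest_{s-1}(v)` of the paper: the youngest ancestor of `v`
whose `(s-1)`-st digit is zero (with `fancest' p v 0 = fancest_{-1}(v) = v`). -/
def fancest' (p v s : ℕ) : ℕ := p ^ s * (v / p ^ s)

/-- The scalar `λ_{v,S} = ∏_{s ∈ S} (-1)^(a_s p^s) · fancest_{s-1}(v)[S]± / fancest_s(v)[S]±`. -/
def lam (p v : ℕ) (S : Finset ℕ) : ℚ :=
  ∏ s ∈ S,
    (-1 : ℚ) ^ (dig p v s * p ^ s) *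
      ((vdown p (fancest' p v s) S : ℚ) / (vdown p (fancest' p v (s + 1)) S : ℚ))

/-- The generation of `v` : the number of (matrilineal) ancestors of `v`, i.e. the
number of nonzero `p`-adic digits of `v` minus one. -/
def gen (p v : ℕ) : ℕ :=
  ((Finset.range v).filter (fun i => dig p v i ≠ 0)).card - 1

/-- A minimal down-admissible stretch for `v`: a down-admissible stretch, no proper
nonempty subset of which is down-admissible for `v`. -/
def MinDownStretch (p v : ℕ) (S : Finset ℕ) : Prop :=
  DownAdm p v S ∧ IsStretch S ∧ ∀ T ⊂ S, T.Nonempty → ¬ DownAdm p v T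

/-- A minimal up-admissible stretch for `v`. -/
def MinUpStretch (p v : ℕ) (S : Finset ℕ) : Prop :=
  UpAdm p v S ∧ IsStretch S ∧ ∀ T ⊂ S, T.Nonempty → ¬ UpAdm p v T

/-- `A` and `B` are distant: `d(A,B) > 1`, i.e. `|a - b| > 1` for all `a ∈ A`, `b ∈ B`. -/
def Distant (A B : Finset ℕ) : Prop :=
  ∀ a ∈ A, ∀ b ∈ B, a + 1 < b ∨ b + 1 < a


/-! ### Auxiliary lemmas -/

lemma dig_div (p v t k : ℕ) : dig p v (t + k) = dig p (v / p ^ t) k := by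
  simp [dig, Nat.div_div_eq_div_mul, pow_add]

lemma pow_le_of_dig_ne {p v i : ℕ} (h : dig p v i ≠ 0) : p ^ i ≤ v := by
  by_contra hc
  push_neg at hc
  have : v / p ^ i = 0 := Nat.div_eq_of_lt hc
  simp [dig, this] at h

lemma dig_eq_zero_of_lt_val {p n i : ℕ} (hp : 1 < p) (h : i < padicValNat p n) :
    dig p n i = 0 := by
  have hd : p ^ (i + 1) ∣ n := dvd_trans (pow_dvd_pow p h) pow_padicValNat_dvd
  obtain ⟨c, rfl⟩ := hd
  have hpos : 0 < p ^ i := pow_pos (by omega) i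
  have : p ^ (i + 1) * c / p ^ i = p * c := by
    rw [show p ^ (i+1) * c = p ^ i * (p * c) by ring, Nat.mul_div_cancel_left _ hpos]
  simp [dig, this]

lemma dig_val_ne_zero {p n : ℕ} (hp : p.Prime) (hn : n ≠ 0) :
    dig p n (padicValNat p n) ≠ 0 := by
  haveI := Fact.mk hp
  intro h
  have hd : p ^ padicValNat p n ∣ n := pow_padicValNat_dvd
  have h2 : p ∣ n / p ^ padicValNat p n := Nat.dvd_of_mod_eq_zero h
  have : p ^ (padicValNat p n + 1) ∣ n := by
    rw [pow_succ]
    exact Nat.mul_dvd_of_dvd_div hd h2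
  exact pow_succ_padicValNat_not_dvd hn this

lemma dig_lt {p : ℕ} (hp : 1 < p) (v i : ℕ) : dig p v i < p := Nat.mod_lt _ (by omega)

/-- least index `≥ t` of a nonzero digit of `v` (when `p ^ t ≤ v`). -/
def mfun (p v t : ℕ) : ℕ := t + padicValNat p (v / p ^ t)

lemma le_mfun (p v t : ℕ) : t ≤ mfun p v t := Nat.le_add_right _ _

lemma dig_mfun_ne {p v t : ℕ} (hp : p.Prime) (h : p ^ t ≤ v) :
    dig p v (mfun p v t) ≠ 0 := by
  have hq : v / p ^ t ≠ 0 := by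
    have := Nat.one_le_div_iff (pow_pos hp.pos t) |>.mpr h
    omega
  rw [mfun, dig_div]
  exact dig_val_ne_zero hp hq

lemma dig_eq_zero_of_lt_mfun {p v t i : ℕ} (hp : p.Prime) (h1 : t ≤ i)
    (h2 : i < mfun p v t) : dig p v i = 0 := by
  obtain ⟨k, rfl⟩ := Nat.exists_eq_add_of_le h1
  rw [dig_div]
  exact dig_eq_zero_of_lt_val hp.one_lt (by unfold mfun at h2; omega)

lemma mfun_le_of_dig_ne {p v t i : ℕ} (hp : p.Prime) (h1 : t ≤ i)
    (h2 : dig p v i ≠ 0) : mfun p v t ≤ i := by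
  by_contra hc
  exact h2 (dig_eq_zero_of_lt_mfun hp h1 (by omega))

lemma padicValNat_fancest' {p v t : ℕ} (hp : p.Prime) (h : p ^ t ≤ v) :
    padicValNat p (fancest' p v t) = mfun p v t := by
  haveI := Fact.mk hp
  have hq : v / p ^ t ≠ 0 := by
    have := Nat.one_le_div_iff (pow_pos hp.pos t) |>.mpr h
    omega
  rw [fancest', padicValNat.mul (pow_ne_zero t hp.pos.ne') hq, padicValNat.prime_pow, mfun]

lemma fancest'_ne_zero {p v t : ℕ} (hp : p.Prime) (h : p ^ t ≤ v) :
    fancest' p v t ≠ 0 := by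
  have hq : v / p ^ t ≠ 0 := by
    have := Nat.one_le_div_iff (pow_pos hp.pos t) |>.mpr h
    omega
  exact mul_ne_zero (pow_ne_zero t hp.pos.ne') hq

lemma vdown_factor {p w : ℕ} (hp : p.Prime) (hw : w ≠ 0) (S : Finset ℕ) :
    ∃ c : ℤ, vdown p w S = (p : ℤ) ^ padicValNat p w * c ∧ ¬ (p : ℤ) ∣ c := by
  haveI := Fact.mk hp
  set k := padicValNat p w with hk
  set T := Finset.range w ∪ S with hT
  refine ⟨∑ i ∈ T, (if i ∈ S then (-1:ℤ) else 1) * (dig p w i : ℤ) * (p:ℤ) ^ (i - k), ?_, ?_⟩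
  · rw [vdown, Finset.mul_sum]
    refine Finset.sum_congr rfl fun i _ => ?_
    by_cases h : k ≤ i
    · rw [show (p:ℤ) ^ k * ((if i ∈ S then (-1:ℤ) else 1) * (dig p w i : ℤ) * (p:ℤ) ^ (i - k))
        = (if i ∈ S then (-1:ℤ) else 1) * (dig p w i : ℤ) * ((p:ℤ) ^ k * (p:ℤ) ^ (i - k)) by ring,
        ← pow_add, show k + (i - k) = i by omega]
    · rw [show dig p w i = 0 from dig_eq_zero_of_lt_val hp.one_lt (by omega)]
      simp
  · intro hdvd
    rw [← ZMod.intCast_zmod_eq_zero_iff_dvd] at hdvd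
    push_cast at hdvd
    have hkT : k ∈ T := by
      have h1 : p ^ k ≤ w := Nat.le_of_dvd (Nat.pos_of_ne_zero hw) pow_padicValNat_dvd
      have h2 : k < p ^ k := Nat.lt_pow_self hp.one_lt
      exact Finset.mem_union_left _ (Finset.mem_range.mpr (by omega))
    rw [Finset.sum_eq_single k (fun i _ hik => ?_) (fun h => absurd hkT h)] at hdvd
    · rw [Nat.sub_self, pow_zero, mul_one] at hdvd
      have hdig : ((dig p w k : ℕ) : ZMod p) ≠ 0 := by
        rw [Ne, ZMod.natCast_eq_zero_iff]
        exact fun hd => dig_val_ne_zero hp hw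
          (Nat.eq_zero_of_dvd_of_lt hd (dig_lt hp.one_lt w k))
      haveI : Nontrivial (ZMod p) := ZMod.nontrivial_iff.mpr hp.one_lt.ne'
      rcases mul_eq_zero.mp hdvd with h | h
      · split_ifs at h
        · exact neg_ne_zero.mpr one_ne_zero h
        · exact one_ne_zero h
      · exact hdig h
    · by_cases h : k ≤ i
      · have : 1 ≤ i - k := by omega
        rw [ZMod.natCast_self, zero_pow (by omega), mul_zero]
      · rw [show dig p w i = 0 from dig_eq_zero_of_lt_val hp.one_lt (by omega)]
        simp

lemma padicValRat_vdown {p w : ℕ} (hp : p.Prime) (hw : w ≠ 0) (S : Finset ℕ) :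
    vdown p w S ≠ 0 ∧ padicValRat p ((vdown p w S : ℚ)) = padicValNat p w := by
  haveI := Fact.mk hp
  obtain ⟨c, hc, hnd⟩ := vdown_factor hp hw S
  have hc0 : c ≠ 0 := by rintro rfl; exact hnd (dvd_zero _)
  have hp0 : ((p:ℤ)) ≠ 0 := by exact_mod_cast hp.pos.ne'
  have hne : vdown p w S ≠ 0 := by
    rw [hc]; exact mul_ne_zero (pow_ne_zero _ hp0) hc0
  refine ⟨hne, ?_⟩
  have h1 : padicValInt p ((p:ℤ) ^ padicValNat p w) = padicValNat p w := by
    unfold padicValInt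
    rw [Int.natAbs_pow, Int.natAbs_natCast, padicValNat.prime_pow]
  have h2 : padicValInt p c = 0 := by
    unfold padicValInt
    apply padicValNat.eq_zero_of_not_dvd
    intro hd
    exact hnd (Int.natAbs_dvd_natAbs.mp (by simpa using hd))
  rw [hc, padicValRat.of_int, padicValInt.mul (pow_ne_zero _ hp0) hc0, h1, h2]
  simp

lemma padicValRat_prod {p : ℕ} [Fact p.Prime] (S : Finset ℕ) (f : ℕ → ℚ)
    (hf : ∀ s ∈ S, f s ≠ 0) :
    padicValRat p (∏ s ∈ S, f s) = ∑ s ∈ S, padicValRat p (f s) := by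
  classical
  induction S using Finset.cons_induction with
  | empty => simp [padicValRat.one]
  | cons a s ha ih =>
    rw [Finset.prod_cons, Finset.sum_cons,
      padicValRat.mul (hf a (Finset.mem_cons_self a s))
        (Finset.prod_ne_zero_iff.mpr fun b hb => hf b (Finset.mem_cons_of_mem hb)),
      ih (fun b hb => hf b (Finset.mem_cons_of_mem hb))]

lemma sum_mfun {p v : ℕ} (hp : p.Prime) (S : Finset ℕ) (hS : DownAdm p v S)
    (hex : ∀ s ∈ S, p ^ (s + 1) ≤ v) :
    ∑ s ∈ S, ((mfun p v (s + 1) : ℤ) - (mfun p v s : ℤ)) = S.card := by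
  classical
  have hexs : ∀ s ∈ S, p ^ s ≤ v := fun s hs =>
    le_trans (Nat.pow_le_pow_right hp.pos (Nat.le_succ s)) (hex s hs)
  have hmono : ∀ s ∈ S, mfun p v s ≤ mfun p v (s + 1) := fun s hs =>
    mfun_le_of_dig_ne hp (le_trans (Nat.le_succ s) (le_mfun p v (s+1)))
      (dig_mfun_ne hp (hex s hs))
  -- if the interval is nonempty, then `dig p v s ≠ 0` and `mfun p v s = s`
  have hkey : ∀ s ∈ S, ∀ i, mfun p v s ≤ i → i < mfun p v (s + 1) →
      dig p v s ≠ 0 ∧ mfun p v s = s := by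
    intro s hs i h1 h2
    by_cases hd : dig p v s = 0
    · exfalso
      have hms : mfun p v s ≠ s := fun h => dig_mfun_ne hp (hexs s hs) (by rw [h]; exact hd)
      have hms' : s + 1 ≤ mfun p v s := by have := le_mfun p v s; omega
      have : mfun p v (s + 1) ≤ mfun p v s :=
        mfun_le_of_dig_ne hp hms' (dig_mfun_ne hp (hexs s hs))
      omega
    · exact ⟨hd, Nat.le_antisymm (mfun_le_of_dig_ne hp le_rfl hd) (le_mfun p v s)⟩
  have hstep : ∀ s ∈ S, ∀ k, s + k < mfun p v (s + 1) → s + k ∈ S := by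
    intro s hs k
    induction k with
    | zero => intro _; simpa using hs
    | succ k ih =>
      intro hk
      have hmem : s + k ∈ S := ih (by omega)
      have hz : dig p v (s + k + 1) = 0 :=
        dig_eq_zero_of_lt_mfun (p := p) (v := v) (t := s + 1) (i := s + k + 1) hp
          (by omega) (by omega)
      exact (show s + (k + 1) = s + k + 1 by omega) ▸ hS.2 (s + k) hmem hz
  have hUnion : S.biUnion (fun s => Finset.Ico (mfun p v s) (mfun p v (s + 1))) = S := by
    ext i
    simp only [Finset.mem_biUnion, Finset.mem_Ico]
    constructor
    · rintro ⟨s, hs, h1, h2⟩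
      obtain ⟨hd, hms⟩ := hkey s hs i h1 h2
      have h1' : s ≤ i := by omega
      obtain ⟨k, rfl⟩ := Nat.exists_eq_add_of_le h1'
      exact hstep s hs k h2
    · intro hi
      induction i using Nat.strong_induction_on with
      | _ i ih =>
        by_cases hd : dig p v i = 0
        · have h1 : ¬ (i = 0 ∨ i - 1 ∉ S) := fun h => hS.1 i hi h hd
          push_neg at h1
          obtain ⟨hne, hmem⟩ := h1
          obtain ⟨s, hs, h2, h3⟩ := ih (i - 1) (by omega) hmem
          refine ⟨s, hs, by omega, ?_⟩
          have hdig := dig_mfun_ne hp (hex s hs)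
          rcases Nat.lt_or_ge i (mfun p v (s + 1)) with h | h
          · exact h
          · exfalso
            have : i = mfun p v (s + 1) := by omega
            exact hdig (this ▸ hd)
        · exact ⟨i, hi, mfun_le_of_dig_ne hp le_rfl hd,
            lt_of_lt_of_le (Nat.lt_succ_self i) (le_mfun p v (i + 1))⟩
  have hdisj : ∀ x ∈ S, ∀ y ∈ S, x ≠ y →
      Disjoint (Finset.Ico (mfun p v x) (mfun p v (x + 1)))
        (Finset.Ico (mfun p v y) (mfun p v (y + 1))) := by
    have haux : ∀ x ∈ S, ∀ y ∈ S, x < y →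
        Disjoint (Finset.Ico (mfun p v x) (mfun p v (x + 1)))
          (Finset.Ico (mfun p v y) (mfun p v (y + 1))) := by
      intro x hx y hy hxy
      rw [Finset.disjoint_left]
      intro i hix hiy
      rw [Finset.mem_Ico] at hix hiy
      obtain ⟨hdx, hmx⟩ := hkey x hx i hix.1 hix.2
      obtain ⟨hdy, hmy⟩ := hkey y hy i hiy.1 hiy.2
      have h1 : mfun p v (x + 1) ≤ y := mfun_le_of_dig_ne hp (by omega) hdy
      omega
    intro x hx y hy hxy
    rcases Nat.lt_or_ge x y with h | h
    · exact haux x hx y hy h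
    · exact (haux y hy x hx (by omega)).symm
  calc ∑ s ∈ S, ((mfun p v (s + 1) : ℤ) - (mfun p v s : ℤ))
      = ∑ s ∈ S, ((Finset.Ico (mfun p v s) (mfun p v (s + 1))).card : ℤ) := by
        refine Finset.sum_congr rfl fun s hs => ?_
        rw [Nat.card_Ico, Nat.cast_sub (hmono s hs)]
    _ = ((S.biUnion (fun s => Finset.Ico (mfun p v s) (mfun p v (s + 1)))).card : ℤ) := by
        rw [Finset.card_biUnion hdisj]
        push_cast
        ring
    _ = S.card := by rw [hUnion]

/-- For every down-admissible set `S` for `v`, the `p`-adic valuation of `λ_{v,S}`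
equals `-|S|`. -/
theorem stmt11 (p v : ℕ) (hp : p.Prime) (hv : 1 ≤ v) (S : Finset ℕ)
    (hS : DownAdm p v S) :
    padicValRat p (lam p v S) = -(S.card : ℤ) := by
  classical
  haveI := Fact.mk hp
  have hex : ∀ s ∈ S, p ^ (s + 1) ≤ v := by
    intro s hs
    by_contra hc
    push_neg at hc
    have hzero : ∀ i, s + 1 ≤ i → dig p v i = 0 := by
      intro i hi
      by_contra hd
      have h1 : p ^ (s + 1) ≤ p ^ i := Nat.pow_le_pow_right hp.pos hi
      have h2 := pow_le_of_dig_ne (p := p) (v := v) (i := i) hd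
      omega
    have hchain : ∀ k, s + k ∈ S := by
      intro k
      induction k with
      | zero => simpa using hs
      | succ k ih =>
        exact (show s + (k + 1) = (s + k) + 1 by omega) ▸
          hS.2 (s + k) ih (hzero _ (by omega))
    have hne : S.Nonempty := ⟨s, hs⟩
    have := Finset.le_max' S _ (hchain (S.max' hne + 1))
    omega
  have hexs : ∀ s ∈ S, p ^ s ≤ v := fun s hs =>
    le_trans (Nat.pow_le_pow_right hp.pos (Nat.le_succ s)) (hex s hs)
  have hA : ∀ s ∈ S, (vdown p (fancest' p v s) S : ℚ) ≠ 0 ∧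
      padicValRat p ((vdown p (fancest' p v s) S : ℚ)) = mfun p v s := by
    intro s hs
    obtain ⟨h1, h2⟩ := padicValRat_vdown hp (fancest'_ne_zero hp (hexs s hs)) S
    exact ⟨by exact_mod_cast h1, by rw [h2, padicValNat_fancest' hp (hexs s hs)]⟩
  have hB : ∀ s ∈ S, (vdown p (fancest' p v (s + 1)) S : ℚ) ≠ 0 ∧
      padicValRat p ((vdown p (fancest' p v (s + 1)) S : ℚ)) = mfun p v (s + 1) := by
    intro s hs
    obtain ⟨h1, h2⟩ := padicValRat_vdown hp (fancest'_ne_zero hp (hex s hs)) S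
    exact ⟨by exact_mod_cast h1, by rw [h2, padicValNat_fancest' hp (hex s hs)]⟩
  have hfne : ∀ s ∈ S, (-1 : ℚ) ^ (dig p v s * p ^ s) *
      ((vdown p (fancest' p v s) S : ℚ) / (vdown p (fancest' p v (s + 1)) S : ℚ)) ≠ 0 := by
    intro s hs
    exact mul_ne_zero (pow_ne_zero _ (by norm_num))
      (div_ne_zero (hA s hs).1 (hB s hs).1)
  have hfval : ∀ s ∈ S, padicValRat p ((-1 : ℚ) ^ (dig p v s * p ^ s) *
      ((vdown p (fancest' p v s) S : ℚ) / (vdown p (fancest' p v (s + 1)) S : ℚ)))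
      = (mfun p v s : ℤ) - (mfun p v (s + 1) : ℤ) := by
    intro s hs
    have hdiv : padicValRat p ((vdown p (fancest' p v s) S : ℚ) /
        (vdown p (fancest' p v (s + 1)) S : ℚ))
        = (mfun p v s : ℤ) - (mfun p v (s + 1) : ℤ) := by
      rw [padicValRat.div (hA s hs).1 (hB s hs).1, (hA s hs).2, (hB s hs).2]
    rcases Nat.even_or_odd (dig p v s * p ^ s) with h | h
    · rw [h.neg_one_pow, one_mul]; exact hdiv
    · rw [h.neg_one_pow, neg_one_mul, padicValRat.neg]; exact hdiv
  have hmain : padicValRat p (lam p v S) = ∑ s ∈ S,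
      ((mfun p v s : ℤ) - (mfun p v (s + 1) : ℤ)) := by
    rw [lam, padicValRat_prod S _ hfne]
    exact Finset.sum_congr rfl hfval
  rw [hmain]
  have hsum := sum_mfun hp S hS hex
  have hflip : ∑ s ∈ S, ((mfun p v s : ℤ) - (mfun p v (s + 1) : ℤ))
      = -∑ s ∈ S, ((mfun p v (s + 1) : ℤ) - (mfun p v s : ℤ)) := by
    rw [← Finset.sum_neg_distrib]
    exact Finset.sum_congr rfl fun s _ => by ring
  rw [hflip, hsum]


end SL2Tilt
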